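/- For non-negative integers l, m, k with 2l ≤ m ≤ 2k, the statistic T(k,m,l) counting (summed over all Dyck paths of semilength k) intervals of m consecutive steps with exactly l falls satisfies T(k,m,l) = T(k,m,m−l). -/
import Mathlib


/-- Binomial coefficient `C(n,r)` for integer arguments, with the convention
that it is `0` when `r < 0` (and, via `Nat.choose`, when `r > n`). -/
def ibinom (n r : ℤ) : ℕ := if 0 ≤ r then n.toNat.choose r.toNat else 0

/-- `L` (with `true` = rise `(1,1)`, `false` = fall `(1,-1)`) is a Dyck path of
semilength `k`: it has `2k` steps, exactly `k` rises, and every prefix has at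
least as many rises as falls (the path stays weakly above the x-axis). -/
def IsDyck (k : ℕ) (L : List Bool) : Prop :=
  L.length = 2 * k ∧ L.count true = k ∧
  ∀ j : ℕ, (L.take j).count false ≤ (L.take j).count true

/-- `T k m l` is the total number, over all Dyck paths of semilength `k`, of
intervals of `m` consecutive steps containing exactly `l` falls.  An interval is
recorded by the pair (path, starting position). -/
noncomputable def T (k m l : ℕ) : ℕ :=
  Nat.card {p : List Bool × ℕ //
    IsDyck k p.1 ∧ p.2 + m ≤ 2 * k ∧ ((p.1.drop p.2).take m).count false = l}

lemma count_not_true (L : List Bool) : (L.map not).count true = L.count false := by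
  have := List.count_map_of_injective L not (fun a b => by cases a <;> cases b <;> simp) false
  simpa using this

lemma count_not_false (L : List Bool) : (L.map not).count false = L.count true := by
  have := List.count_map_of_injective L not (fun a b => by cases a <;> cases b <;> simp) true
  simpa using this

lemma count_tf (L : List Bool) : L.count true + L.count false = L.length := by
  induction L with
  | nil => simp
  | cons a L ih => cases a <;> simp [List.count_cons] <;> omega

/-- the reflection of a path in the vertical line through its midpoint -/
def refl' (L : List Bool) : List Bool := (L.map not).reverse

lemma refl'_refl' (L : List Bool) : refl' (refl' L) = L := by
  simp [refl', List.map_reverse, List.map_map, Function.comp_def, Bool.not_not]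

lemma isDyck_refl' {k : ℕ} {L : List Bool} (h : IsDyck k L) : IsDyck k (refl' L) := by
  obtain ⟨hlen, hcnt, hpre⟩ := h
  have hlen' : (refl' L).length = 2 * k := by simp [refl', hlen]
  have hfalse : L.count false = k := by have := count_tf L; omega
  refine ⟨hlen', ?_, ?_⟩
  · rw [refl', List.count_reverse, count_not_true, hfalse]
  · intro j
    rw [refl', List.take_reverse, List.count_reverse, List.count_reverse,
      ← List.map_drop, count_not_true, count_not_false]
    set t := (L.map not).length - j with ht
    have h1 := count_tf (L.take t)
    have h2 := count_tf (L.drop t)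
    have h3 : (L.take t).count true + (L.drop t).count true = k := by
      rw [← List.count_append, List.take_append_drop, hcnt]
    have h4 : (L.take t).count false + (L.drop t).count false = k := by
      rw [← List.count_append, List.take_append_drop, hfalse]
    have := hpre t
    omega

lemma window_refl' {L : List Bool} {p m : ℕ} (h : p + m ≤ L.length) :
    (((refl' L).drop (L.length - m - p)).take m) = (((L.drop p).take m).map not).reverse := by
  rw [refl', List.drop_reverse, List.take_reverse]
  simp only [List.length_map, List.length_take]
  have e1 : L.length - (L.length - m - p) = m + p := by omega
  rw [e1]
  have e2 : min (m + p) L.length - m = p := by omega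
  rw [e2, List.drop_take, Nat.add_sub_cancel, ← List.map_drop, ← List.map_take]

/-- the reflection carries `l`-fall windows to `(m-l)`-fall windows -/
lemma refl'_mem {k m l : ℕ} (p : List Bool × ℕ)
    (hp : IsDyck k p.1 ∧ p.2 + m ≤ 2 * k ∧ ((p.1.drop p.2).take m).count false = l) :
    IsDyck k (refl' p.1) ∧ (2 * k - m - p.2) + m ≤ 2 * k ∧
      (((refl' p.1).drop (2 * k - m - p.2)).take m).count false = m - l := by
  obtain ⟨hd, hle, hcnt⟩ := hp
  have hlen : p.1.length = 2 * k := hd.1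
  refine ⟨isDyck_refl' hd, by omega, ?_⟩
  have hw := window_refl' (L := p.1) (p := p.2) (m := m) (by omega)
  rw [hlen] at hw
  rw [hw, List.count_reverse, count_not_false]
  have hwl : ((p.1.drop p.2).take m).length = m := by
    rw [List.length_take, List.length_drop]; omega
  have := count_tf ((p.1.drop p.2).take m)
  omega

theorem stmt_7 (k m l : ℕ) (h1 : 2 * l ≤ m) (h2 : m ≤ 2 * k) :
    T k m l = T k m (m - l) := by
  unfold T
  apply Nat.card_congr
  refine
    { toFun := fun x => ⟨(refl' x.1.1, 2 * k - m - x.1.2), refl'_mem x.1 x.2⟩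
      invFun := fun x => ⟨(refl' x.1.1, 2 * k - m - x.1.2), ?_⟩
      left_inv := ?_, right_inv := ?_ }
  · obtain ⟨⟨L, q⟩, hd, hle, hcnt⟩ := x
    have h' := refl'_mem (k := k) (m := m) (l := m - l) (L, q) ⟨hd, hle, hcnt⟩
    have e : m - (m - l) = l := by omega
    rw [e] at h'
    simpa using h'
  · rintro ⟨⟨L, q⟩, hd, hle, hcnt⟩
    have : 2 * k - m - (2 * k - m - q) = q := by omega
    simp [refl'_refl', this]
  · rintro ⟨⟨L, q⟩, hd, hle, hcnt⟩
    have : 2 * k - m - (2 * k - m - q) = q := by omega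
    simp [refl'_refl', this]
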